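/- For all distinct positive real numbers a and b, 1 < I(a,b)/√(I(A(a,b)², G(a,b)²)) < 2/√e. -/

import Mathlib

noncomputable def A (a b : ℝ) : ℝ := (a + b) / 2
noncomputable def G (a b : ℝ) : ℝ := Real.sqrt (a * b)
noncomputable def I (a b : ℝ) : ℝ := (1 / Real.exp 1) * (a ^ a / b ^ b) ^ (1 / (a - b))

open Real Set

/-!
The ratio `I a b / √(I (A²) (G²))` is symmetric and homogeneous of degree `0` in `(a, b)`,
so it suffices to take `(a, b) = (t, 1)` with `t > 1`. There its logarithm is
`identricGap t / (2 (t - 1)²)`, and both bounds become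
`0 < identricGap t < (2 log 2 - 1) (t - 1)²`.
These follow by differentiating twice, since all functions involved vanish at `t = 1` and
the second derivative `4 log (2t / (t + 1)) + 2 / t - 2` of `identricGap` lies strictly between
`0` and `4 log 2 - 2`, by `log x < x - 1`.
-/

theorem I_pos {a b : ℝ} (ha : 0 < a) (hb : 0 < b) : 0 < I a b := by
  unfold I
  positivity

theorem log_I {a b : ℝ} (ha : 0 < a) (hb : 0 < b) :
    log (I a b) = (a * log a - b * log b) / (a - b) - 1 := by
  have hab : 0 < a ^ a / b ^ b := by positivity
  rw [I, log_mul (by positivity) (by positivity), log_rpow hab,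
    log_div (x := a ^ a) (by positivity) (by positivity), log_rpow ha, log_rpow hb,
    one_div (exp 1), log_inv, log_exp]
  ring

theorem I_comm {a b : ℝ} (ha : 0 < a) (hb : 0 < b) : I a b = I b a := by
  refine log_injOn_pos (I_pos ha hb) (I_pos hb ha) ?_
  rw [log_I ha hb, log_I hb ha]
  rcases eq_or_ne a b with rfl | hab
  · rfl
  · field_simp [sub_ne_zero.2 hab, sub_ne_zero.2 hab.symm]
    ring

theorem I_mul {a b c : ℝ} (ha : 0 < a) (hb : 0 < b) (hc : 0 < c) (hab : a ≠ b) :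
    I (c * a) (c * b) = c * I a b := by
  refine log_injOn_pos (I_pos (mul_pos hc ha) (mul_pos hc hb)) (mul_pos hc (I_pos ha hb)) ?_
  rw [log_mul hc.ne' (I_pos ha hb).ne', log_I (mul_pos hc ha) (mul_pos hc hb), log_I ha hb,
    log_mul hc.ne' ha.ne', log_mul hc.ne' hb.ne']
  field_simp [sub_ne_zero.2 hab]
  ring

theorem A_sq_sub_G_sq {a b : ℝ} (hab : 0 ≤ a * b) :
    A a b ^ 2 - G a b ^ 2 = ((a - b) / 2) ^ 2 := by
  rw [A, G, sq_sqrt hab]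
  ring

noncomputable def identricRatio (a b : ℝ) : ℝ := I a b / √(I (A a b ^ 2) (G a b ^ 2))

theorem identricRatio_pos {a b : ℝ} (ha : 0 < a) (hb : 0 < b) : 0 < identricRatio a b := by
  have : 0 < A a b := by unfold A; positivity
  have : 0 < G a b := by unfold G; positivity
  exact div_pos (I_pos ha hb) (sqrt_pos.2 (I_pos (by positivity) (by positivity)))

theorem identricRatio_comm {a b : ℝ} (ha : 0 < a) (hb : 0 < b) :
    identricRatio a b = identricRatio b a := by
  have hA : A a b = A b a := by rw [A, A, add_comm]
  have hG : G a b = G b a := by rw [G, G, mul_comm]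
  rw [identricRatio, identricRatio, I_comm ha hb, hA, hG]

theorem identricRatio_mul {a b c : ℝ} (ha : 0 < a) (hb : 0 < b) (hc : 0 < c) (hab : a ≠ b) :
    identricRatio (c * a) (c * b) = identricRatio a b := by
  have hA : A (c * a) (c * b) ^ 2 = c ^ 2 * A a b ^ 2 := by rw [A, A]; ring
  have hG : G (c * a) (c * b) ^ 2 = c ^ 2 * G a b ^ 2 := by
    rw [G, G, sq_sqrt (by positivity), sq_sqrt (by positivity)]; ring
  have hAG : A a b ^ 2 ≠ G a b ^ 2 := by
    rw [← sub_ne_zero, A_sq_sub_G_sq (by positivity)]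
    exact pow_ne_zero 2 (div_ne_zero (sub_ne_zero.2 hab) two_ne_zero)
  have : 0 < A a b := by unfold A; positivity
  have : 0 < G a b := by unfold G; positivity
  rw [identricRatio, identricRatio, hA, hG,
    I_mul (by positivity) (by positivity) (by positivity) hAG, sqrt_mul (by positivity),
    sqrt_sq hc.le, I_mul ha hb hc hab, mul_div_mul_left _ _ hc.ne']

noncomputable def identricGap (t : ℝ) : ℝ :=
  2 * t * (t + 1) * log t - 2 * (t + 1) ^ 2 * log ((t + 1) / 2) - (t - 1) ^ 2

theorem log_identricRatio {t : ℝ} (ht : 0 < t) (ht1 : t ≠ 1) :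
    log (identricRatio t 1) = identricGap t / (2 * (t - 1) ^ 2) := by
  have hA : A t 1 = (t + 1) / 2 := rfl
  have hG : G t 1 ^ 2 = t := by rw [G, mul_one, sq_sqrt ht.le]
  have hAG : ((t + 1) / 2) ^ 2 - t = ((t - 1) / 2) ^ 2 := by ring
  have hsub : t - 1 ≠ 0 := sub_ne_zero.2 ht1
  have hI : 0 < I (((t + 1) / 2) ^ 2) t := I_pos (by positivity) ht
  rw [identricRatio, hA, hG, log_div (I_pos ht one_pos).ne' (sqrt_pos.2 hI).ne', log_sqrt hI.le,
    log_I ht one_pos, log_I (by positivity) ht, hAG,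
    log_pow, log_one, identricGap]
  field_simp
  ring

theorem lt_of_hasDerivAt_lt {f g f' g' : ℝ → ℝ} {a t : ℝ}
    (hf : ∀ x ≥ a, HasDerivAt f (f' x) x) (hg : ∀ x ≥ a, HasDerivAt g (g' x) x)
    (hfg : f a = g a) (hlt : ∀ x > a, f' x < g' x) (hat : a < t) : f t < g t := by
  have hmono : StrictMonoOn (g - f) (Ici a) := by
    refine strictMonoOn_of_hasDerivWithinAt_pos (f' := g' - f') (convex_Ici a)
      (fun x hx => ((hg x hx).sub (hf x hx)).continuousAt.continuousWithinAt) ?_ ?_ <;>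
    intro x hx <;> rw [interior_Ici] at hx
    · exact ((hg x hx.le).sub (hf x hx.le)).hasDerivWithinAt
    · exact sub_pos.2 (hlt x hx)
  simpa [hfg] using hmono self_mem_Ici hat.le hat

noncomputable def identricGapDeriv (t : ℝ) : ℝ :=
  (4 * t + 2) * log t - 4 * (t + 1) * log ((t + 1) / 2) - 2 * (t - 1)

theorem hasDerivAt_log_add_one_div_two {t : ℝ} (ht : t + 1 ≠ 0) :
    HasDerivAt (fun x => log ((x + 1) / 2)) (1 / (t + 1)) t := by
  have h : HasDerivAt (fun x => log ((x + 1) / 2)) _ t :=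
    (((hasDerivAt_id t).add_const 1).div_const 2).log (by simpa)
  refine h.congr_deriv ?_
  simp only [id]
  field_simp

theorem hasDerivAt_identricGap {t : ℝ} (ht : 0 < t) :
    HasDerivAt identricGap (identricGapDeriv t) t := by
  have h : HasDerivAt identricGap _ t :=
    ((((hasDerivAt_id t).const_mul 2).mul ((hasDerivAt_id t).add_const 1)).mul
      (hasDerivAt_log ht.ne')).sub
    (((((hasDerivAt_id t).add_const 1).pow 2).const_mul 2).mul
      (hasDerivAt_log_add_one_div_two (by positivity)))
    |>.sub (((hasDerivAt_id t).sub_const 1).pow 2)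
  refine h.congr_deriv ?_
  simp only [identricGapDeriv, id, Pi.mul_apply, Pi.pow_apply]
  field_simp
  ring

theorem hasDerivAt_identricGapDeriv {t : ℝ} (ht : 0 < t) :
    HasDerivAt identricGapDeriv (4 * log t - 4 * log ((t + 1) / 2) + 2 / t - 2) t := by
  have h : HasDerivAt identricGapDeriv _ t :=
    ((((hasDerivAt_id t).const_mul 4).add_const 2).mul (hasDerivAt_log ht.ne')).sub
    ((((hasDerivAt_id t).add_const 1).const_mul 4).mul
      (hasDerivAt_log_add_one_div_two (by positivity)))
    |>.sub (((hasDerivAt_id t).sub_const 1).const_mul 2)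
  refine h.congr_deriv ?_
  simp only [id]
  field_simp
  ring

theorem identricGapDeriv_deriv_pos {t : ℝ} (ht : 1 < t) :
    0 < 4 * log t - 4 * log ((t + 1) / 2) + 2 / t - 2 := by
  have ht0 : 0 < t := by linarith
  have hlog := log_lt_sub_one_of_pos (x := (t + 1) / (2 * t)) (by positivity)
    (by rw [Ne, div_eq_one_iff_eq (by positivity)]; linarith)
  rw [log_div (by positivity) (by positivity), log_mul two_ne_zero ht0.ne'] at hlog
  rw [log_div (by positivity) two_ne_zero]
  have : (t + 1) / (2 * t) - 1 = 1 / (2 * t) - 1 / 2 := by field_simp; ring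
  have : 2 / t = 4 * (1 / (2 * t)) := by field_simp; ring
  linarith

theorem identricGapDeriv_deriv_lt {t : ℝ} (ht : 1 < t) :
    4 * log t - 4 * log ((t + 1) / 2) + 2 / t - 2 < 4 * log 2 - 2 := by
  have ht0 : 0 < t := by linarith
  have hlog := log_lt_sub_one_of_pos (x := t / (t + 1)) (by positivity)
    (by rw [Ne, div_eq_one_iff_eq (by positivity)]; linarith)
  rw [log_div ht0.ne' (by positivity)] at hlog
  rw [log_div (by positivity) two_ne_zero]
  have : t / (t + 1) - 1 = -(1 / (t + 1)) := by field_simp; ring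
  have : 2 / t < 4 * (1 / (t + 1)) := by
    rw [mul_one_div, div_lt_div_iff₀ ht0 (by positivity)]; linarith
  linarith

theorem identricGapDeriv_pos {t : ℝ} (ht : 1 < t) : 0 < identricGapDeriv t :=
  lt_of_hasDerivAt_lt (f := fun _ => 0) (fun x _ => hasDerivAt_const x 0)
    (fun x hx => hasDerivAt_identricGapDeriv (by linarith))
    (by norm_num [identricGapDeriv]) (fun x hx => identricGapDeriv_deriv_pos hx) ht

theorem identricGapDeriv_lt {t : ℝ} (ht : 1 < t) :
    identricGapDeriv t < (4 * log 2 - 2) * (t - 1) :=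
  lt_of_hasDerivAt_lt (fun x hx => hasDerivAt_identricGapDeriv (by linarith))
    (fun x _ => ((hasDerivAt_id x).sub_const 1).const_mul _ |>.congr_deriv (mul_one _))
    (by norm_num [identricGapDeriv]) (fun x hx => identricGapDeriv_deriv_lt hx) ht

theorem identricGap_pos {t : ℝ} (ht : 1 < t) : 0 < identricGap t :=
  lt_of_hasDerivAt_lt (f := fun _ => 0) (fun x _ => hasDerivAt_const x 0)
    (fun x hx => hasDerivAt_identricGap (by linarith))
    (by norm_num [identricGap]) (fun x hx => identricGapDeriv_pos hx) ht

theorem identricGap_lt {t : ℝ} (ht : 1 < t) :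
    identricGap t < (2 * log 2 - 1) * (t - 1) ^ 2 := by
  refine lt_of_hasDerivAt_lt (fun x hx => hasDerivAt_identricGap (by linarith))
    (fun x _ => (((hasDerivAt_id x).sub_const 1).pow 2).const_mul _)
    (by norm_num [identricGap]) (fun x hx => ?_) ht
  norm_num
  linarith [identricGapDeriv_lt hx]

theorem stmt_0 (a b : ℝ) (ha : 0 < a) (hb : 0 < b) (hab : a ≠ b) :
    1 < I a b / Real.sqrt (I (A a b ^ 2) (G a b ^ 2)) ∧
    I a b / Real.sqrt (I (A a b ^ 2) (G a b ^ 2)) < 2 / Real.sqrt (Real.exp 1) := by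
  change 1 < identricRatio a b ∧ identricRatio a b < 2 / √(exp 1)
  wlog hba : b < a generalizing a b
  · rw [identricRatio_comm ha hb]
    exact this b a hb ha hab.symm (hab.lt_or_gt.resolve_right hba)
  have ht : 1 < a / b := (one_lt_div hb).2 hba
  have hbound : 2 / √(exp 1) = exp (log 2 - 1 / 2) := by
    rw [exp_sub, exp_log two_pos, exp_half]
  have hratio : identricRatio a b = identricRatio (a / b) 1 := by
    rw [← identricRatio_mul (by positivity) one_pos hb ht.ne', mul_div_cancel₀ _ hb.ne',
      mul_one]
  rw [hbound, ← exp_log (identricRatio_pos ha hb), one_lt_exp_iff, exp_lt_exp, hratio,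
    log_identricRatio (by positivity) ht.ne']
  have hden : 0 < 2 * (a / b - 1) ^ 2 := by have := sub_pos.2 ht; positivity
  exact ⟨div_pos (identricGap_pos ht) hden,
    (div_lt_iff₀ hden).2 (by linarith [identricGap_lt ht])⟩
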